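/- arXiv:2304.09672 — 4 statements merged into one kernel-verified Lean document; each statement's English description precedes it below -/
import Mathlib

section
/- Let s ≥ 1 be an integer, c_1 < … < c_s be s distinct real numbers, and A the coefficient matrix of the associated Runge–Kutta collocation method. Then the characteristic polynomial of A equals τ(π)/s!, where π = ∏_{i=1}^s (X − c_i) and τ is the linear map on polynomials of degree at most s sending Σ_k a_k X^k to Σ_k k! a_k X^k. Equivalently, s! · det(X·I − A) = τ(π)(X). -/
open Polynomial Matrix MeasureTheory

noncomputable section

/-- Lagrange basis function `ℓ_i(t) = ∏_{j≠i} (t - c_j)/(c_i - c_j)`. -/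
def lagrangeFun (s : ℕ) (c : Fin s → ℝ) (i : Fin s) (t : ℝ) : ℝ :=
  ∏ j ∈ Finset.univ.erase i, (t - c j) / (c i - c j)

/-- Coefficient matrix `A` of the collocation method: `a_{ij} = ∫_0^{c_i} ℓ_j`. -/
def collocA (s : ℕ) (c : Fin s → ℝ) : Matrix (Fin s) (Fin s) ℝ :=
  Matrix.of fun i j => ∫ t in (0:ℝ)..(c i), lagrangeFun s c j t

/-- Weight vector `b` of the collocation method: `b_i = ∫_0^1 ℓ_i`. -/
def collocB (s : ℕ) (c : Fin s → ℝ) : Fin s → ℝ :=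
  fun i => ∫ t in (0:ℝ)..(1:ℝ), lagrangeFun s c i t

/-- `π = ∏ (X - c_i)`. -/
def piPoly (s : ℕ) (c : Fin s → ℝ) : Polynomial ℝ :=
  ∏ i : Fin s, (Polynomial.X - Polynomial.C (c i))

/-- The linear map `τ` sending `Σ a_k X^k` to `Σ k! a_k X^k`. -/
def tauP (p : Polynomial ℝ) : Polynomial ℝ :=
  ∑ k ∈ p.support, Polynomial.C ((k.factorial : ℝ) * p.coeff k) * Polynomial.X ^ k

/-- The matrix `A` viewed as a complex matrix. -/
def collocAC (s : ℕ) (c : Fin s → ℝ) : Matrix (Fin s) (Fin s) ℂ :=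
  (collocA s c).map (fun x => (x : ℂ))

/-- The weight vector `b` viewed as a complex vector. -/
def collocBC (s : ℕ) (c : Fin s → ℝ) : Fin s → ℂ :=
  fun i => (collocB s c i : ℂ)

/-- The linear stability function `R(λ) = 1 + λ bᵀ (I - λ A)⁻¹ 𝟙`. -/
def stabR (s : ℕ) (c : Fin s → ℝ) (lam : ℂ) : ℂ :=
  1 + lam * (collocBC s c ⬝ᵥ ((1 - lam • collocAC s c)⁻¹ *ᵥ (fun _ => 1)))

/-- A-stability: `|R(λ)| ≤ 1` on the closed left half-plane (where defined). -/
def AStable (s : ℕ) (c : Fin s → ℝ) : Prop :=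
  ∀ lam : ℂ, lam.re ≤ 0 → IsUnit (1 - lam • collocAC s c).det →
    ‖stabR s c lam‖ ≤ 1

/-- I-stability: `|R(λ)| ≤ 1` on the imaginary axis (where defined). -/
def IStable (s : ℕ) (c : Fin s → ℝ) : Prop :=
  ∀ lam : ℂ, lam.re = 0 → IsUnit (1 - lam • collocAC s c).det →
    ‖stabR s c lam‖ ≤ 1

/-- AS-stability: `I - λA` invertible on `ℂ⁻` and `λ bᵀ (I - λA)⁻¹` uniformly bounded there. -/
def ASStable (s : ℕ) (c : Fin s → ℝ) : Prop :=
  (∀ lam : ℂ, lam.re ≤ 0 → IsUnit (1 - lam • collocAC s c).det) ∧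
  ∃ M : ℝ, ∀ lam : ℂ, lam.re ≤ 0 → ∀ j,
    ‖lam * (collocBC s c ᵥ* (1 - lam • collocAC s c)⁻¹) j‖ ≤ M

/-- ASI-stability: `I - λA` invertible on `ℂ⁻` and `(I - λA)⁻¹` uniformly bounded there. -/
def ASIStable (s : ℕ) (c : Fin s → ℝ) : Prop :=
  (∀ lam : ℂ, lam.re ≤ 0 → IsUnit (1 - lam • collocAC s c).det) ∧
  ∃ M : ℝ, ∀ lam : ℂ, lam.re ≤ 0 → ∀ i j,
    ‖(1 - lam • collocAC s c)⁻¹ i j‖ ≤ M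

/-- IS-stability: `I - λA` invertible on `iℝ` and `λ bᵀ (I - λA)⁻¹` uniformly bounded there. -/
def ISStable (s : ℕ) (c : Fin s → ℝ) : Prop :=
  (∀ lam : ℂ, lam.re = 0 → IsUnit (1 - lam • collocAC s c).det) ∧
  ∃ M : ℝ, ∀ lam : ℂ, lam.re = 0 → ∀ j,
    ‖lam * (collocBC s c ᵥ* (1 - lam • collocAC s c)⁻¹) j‖ ≤ M

/-- ISI-stability: `I - λA` invertible on `iℝ` and `(I - λA)⁻¹` uniformly bounded there. -/
def ISIStable (s : ℕ) (c : Fin s → ℝ) : Prop :=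
  (∀ lam : ℂ, lam.re = 0 → IsUnit (1 - lam • collocAC s c).det) ∧
  ∃ M : ℝ, ∀ lam : ℂ, lam.re = 0 → ∀ i j,
    ‖(1 - lam • collocAC s c)⁻¹ i j‖ ≤ M

end

/-! The vectors `e_k = (c_i ^ k / k!)_i` satisfy `A e_k = e_{k+1}` for `k < s`, because the
quadrature `∫_0^{c_i} q = ∑_j a_{ij} q(c_j)` is exact for `deg q < s`. Hence `A^k 𝟙 = e_k` for
`k ≤ s`, so `τ(q)(A) 𝟙 = (q(c_i))_i` whenever `deg q ≤ s`; for `q = π` this vanishes. Since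
`e_0, …, e_{s-1}` are the columns of a rescaled Vandermonde matrix, `𝟙` is a cyclic vector of `A`,
and the only monic polynomial of degree `s` killing a cyclic vector is the characteristic polynomial:
their difference has degree `< s` and kills `𝟙` by Cayley–Hamilton. -/

open scoped Nat

namespace Matrix

variable {R ι : Type*} [CommRing R] [Fintype ι] [DecidableEq ι] {M : Matrix ι ι R} {v : ι → R}

theorem eq_zero_of_aeval_mulVec_eq_zero
    (hv : LinearIndependent R fun k : Fin (Fintype.card ι) => (M ^ (k : ℕ)) *ᵥ v)
    {p : R[X]} (hp : p.degree < Fintype.card ι) (hpv : aeval M p *ᵥ v = 0) : p = 0 := by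
  by_contra hp0
  have hnat := (natDegree_lt_iff_degree_lt hp0).2 hp
  rw [aeval_eq_sum_range' hnat, sum_mulVec, ← Fin.sum_univ_eq_sum_range
    (fun k => (p.coeff k • M ^ k) *ᵥ v)] at hpv
  simp only [smul_mulVec] at hpv
  have hcoeff := Fintype.linearIndependent_iff.mp hv _ hpv
  refine hp0 (Polynomial.ext fun k => ?_)
  rcases lt_or_ge k (Fintype.card ι) with hk | hk
  · exact hcoeff ⟨k, hk⟩
  · exact coeff_eq_zero_of_natDegree_lt (hnat.trans_le hk)

theorem charpoly_eq_of_linearIndependent_pow_mulVec [Nontrivial R]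
    (hv : LinearIndependent R fun k : Fin (Fintype.card ι) => (M ^ (k : ℕ)) *ᵥ v)
    {g : R[X]} (hg : g.Monic) (hdeg : g.natDegree = Fintype.card ι)
    (hgv : aeval M g *ᵥ v = 0) : M.charpoly = g := by
  have hdeg' : g.degree = Fintype.card ι := by rw [degree_eq_natDegree hg.ne_zero, hdeg]
  rw [← sub_eq_zero]
  refine eq_zero_of_aeval_mulVec_eq_zero hv ?_ ?_
  · rw [← hdeg']
    refine degree_sub_lt_right ?_ hg.ne_zero ?_
    · rw [charpoly_degree_eq_dim, hdeg']
    · rw [(charpoly_monic M).leadingCoeff, hg.leadingCoeff]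
  · rw [map_sub, aeval_self_charpoly, zero_sub, neg_mulVec, hgv, neg_zero]

end Matrix

theorem coeff_tauP (p : ℝ[X]) (k : ℕ) : (tauP p).coeff k = k ! * p.coeff k := by
  simp only [tauP, finsetSum_coeff, coeff_C_mul_X_pow, Finset.sum_ite_eq, mem_support_iff]
  split_ifs with h
  · rfl
  · rw [not_not.mp h, mul_zero]

theorem natDegree_tauP (p : ℝ[X]) : (tauP p).natDegree = p.natDegree := by
  rcases eq_or_ne p 0 with rfl | hp
  · simp [tauP]
  refine natDegree_eq_of_le_of_coeff_ne_zero ?_ ?_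
  · refine natDegree_le_iff_coeff_eq_zero.mpr fun k hk => ?_
    rw [coeff_tauP, coeff_eq_zero_of_natDegree_lt hk, mul_zero]
  · rw [coeff_tauP]
    exact mul_ne_zero (by positivity) (leadingCoeff_ne_zero.mpr hp)

theorem leadingCoeff_tauP (p : ℝ[X]) :
    (tauP p).leadingCoeff = p.natDegree ! * p.leadingCoeff := by
  rw [leadingCoeff, natDegree_tauP, coeff_tauP, leadingCoeff]

theorem monic_piPoly (s : ℕ) (c : Fin s → ℝ) : (piPoly s c).Monic :=
  monic_prod_of_monic _ _ fun i _ => monic_X_sub_C (c i)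

theorem natDegree_piPoly (s : ℕ) (c : Fin s → ℝ) : (piPoly s c).natDegree = s := by
  rw [piPoly, natDegree_prod_of_monic _ _ fun i _ => monic_X_sub_C (c i)]
  simp

theorem eval_piPoly (s : ℕ) (c : Fin s → ℝ) (i : Fin s) : (piPoly s c).eval (c i) = 0 := by
  rw [piPoly, eval_prod]
  exact Finset.prod_eq_zero (Finset.mem_univ i) (by simp)

theorem lagrangeFun_eq_eval (s : ℕ) (c : Fin s → ℝ) (j : Fin s) (t : ℝ) :
    lagrangeFun s c j t = (Lagrange.basis Finset.univ c j).eval t := by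
  rw [lagrangeFun, Lagrange.basis, eval_prod]
  refine Finset.prod_congr rfl fun k _ => ?_
  simp [Lagrange.basisDivisor, div_eq_mul_inv, mul_comm]

section Collocation

variable {s : ℕ} {c : Fin s → ℝ}

theorem collocA_mulVec_eval (hc : Function.Injective c) {q : ℝ[X]} (hq : q.degree < s) :
    collocA s c *ᵥ (fun j => q.eval (c j)) = fun i => ∫ t in (0 : ℝ)..c i, q.eval t := by
  have hinterp : (fun t => q.eval t) = fun t => ∑ j, q.eval (c j) * lagrangeFun s c j t := by
    ext t
    conv_lhs =>
      rw [Lagrange.eq_interpolate (s := Finset.univ) (f := q) hc.injOn (by simpa using hq)]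
    simp [Lagrange.interpolate_apply, eval_finsetSum, lagrangeFun_eq_eval]
  ext i
  have hcont (j : Fin s) : Continuous (lagrangeFun s c j) :=
    (Polynomial.continuous _).congr fun t => (lagrangeFun_eq_eval s c j t).symm
  rw [hinterp, intervalIntegral.integral_finsetSum
    (f := fun j t => q.eval (c j) * lagrangeFun s c j t) fun j _ =>
    ((continuous_const.mul (hcont j)).intervalIntegrable _ _)]
  simp only [mulVec, dotProduct, collocA, of_apply, intervalIntegral.integral_const_mul]
  exact Finset.sum_congr rfl fun j _ => mul_comm _ _

theorem collocA_mulVec_pow_div_factorial (hc : Function.Injective c) {k : ℕ} (hk : k < s) :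
    collocA s c *ᵥ (fun j => c j ^ k / k !) = fun i => c i ^ (k + 1) / (k + 1)! := by
  have h := collocA_mulVec_eval hc (q := C (k ! : ℝ)⁻¹ * X ^ k)
    ((degree_C_mul_X_pow_le _ _).trans_lt (by exact_mod_cast hk))
  simp only [eval_mul, eval_C, eval_pow, eval_X, intervalIntegral.integral_const_mul,
    integral_pow] at h
  rw [funext fun j => div_eq_inv_mul (c j ^ k) _, h]
  ext i
  push_cast [Nat.factorial_succ]
  field_simp
  ring

theorem collocA_pow_mulVec_one (hc : Function.Injective c) {k : ℕ} (hk : k ≤ s) :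
    (collocA s c ^ k) *ᵥ (fun _ => 1) = fun i => c i ^ k / k ! := by
  induction k with
  | zero => ext; simp
  | succ k ih =>
    rw [pow_succ', ← mulVec_mulVec, ih (by omega), collocA_mulVec_pow_div_factorial hc hk]

theorem aeval_collocA_tauP_mulVec_one (hc : Function.Injective c) {q : ℝ[X]}
    (hq : q.natDegree ≤ s) :
    aeval (collocA s c) (tauP q) *ᵥ (fun _ => 1) = fun i => q.eval (c i) := by
  have hlt : (tauP q).natDegree < s + 1 := by rw [natDegree_tauP]; omega
  ext i
  rw [aeval_eq_sum_range' hlt, sum_mulVec, eval_eq_sum_range' (by omega : q.natDegree < s + 1)]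
  simp only [Finset.sum_apply, smul_mulVec]
  refine Finset.sum_congr rfl fun k hk => ?_
  rw [collocA_pow_mulVec_one hc (Nat.lt_succ_iff.mp (Finset.mem_range.mp hk)), coeff_tauP]
  simp only [Pi.smul_apply, smul_eq_mul]
  field_simp

theorem linearIndependent_collocA_pow_mulVec_one (hc : Function.Injective c) :
    LinearIndependent ℝ fun k : Fin s => (collocA s c ^ (k : ℕ)) *ᵥ fun _ => 1 := by
  have hV := linearIndependent_cols_of_det_ne_zero (det_vandermonde_ne_zero_iff.mpr hc)
  have hscale : (fun k : Fin s => fun i => c i ^ (k : ℕ) / (k : ℕ)!) =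
      (fun k : Fin s => Units.mk0 ((k : ℕ)! : ℝ)⁻¹ (by positivity)) •
        (vandermonde c).col := by
    ext k i
    rw [Pi.smul_apply']
    simp [col, div_eq_inv_mul, Units.smul_def]
  rw [funext fun k : Fin s => collocA_pow_mulVec_one hc k.isLt.le, hscale]
  exact hV.units_smul _

end Collocation

theorem charpoly_collocA_general (s : ℕ) (c : Fin s → ℝ) (hc : StrictMono c) :
    Polynomial.C (s.factorial : ℝ) * (collocA s c).charpoly = tauP (piPoly s c) := by
  have hs : (s ! : ℝ) ≠ 0 := by positivity
  suffices (collocA s c).charpoly = C (s ! : ℝ)⁻¹ * tauP (piPoly s c) by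
    rw [this, ← mul_assoc, ← C_mul, mul_inv_cancel₀ hs, C_1, one_mul]
  refine charpoly_eq_of_linearIndependent_pow_mulVec (v := fun _ => 1) ?_ ?_ ?_ ?_
  · exact (linearIndependent_equiv' (finCongr (Fintype.card_fin s)) rfl).mpr
      (linearIndependent_collocA_pow_mulVec_one hc.injective)
  · rw [Monic, leadingCoeff_mul, leadingCoeff_C, leadingCoeff_tauP, natDegree_piPoly,
      (monic_piPoly s c).leadingCoeff, mul_one, inv_mul_cancel₀ hs]
  · rw [natDegree_C_mul (inv_ne_zero hs), natDegree_tauP, natDegree_piPoly, Fintype.card_fin]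
  · rw [map_mul, aeval_C, ← mulVec_mulVec, aeval_collocA_tauP_mulVec_one hc.injective
      (natDegree_piPoly s c).le]
    simp only [eval_piPoly]
    exact mulVec_zero _

/-- `s! · χ_A = τ(π)`, i.e. the characteristic polynomial of `A` is `τ(π)/s!`. -/
theorem charpoly_collocA (s : ℕ) (hs : 1 ≤ s) (c : Fin s → ℝ) (hc : StrictMono c) :
    Polynomial.C (s.factorial : ℝ) * (collocA s c).charpoly = tauP (piPoly s c) :=
  charpoly_collocA_general s c hc
end

section
/- Let s ≥ 1 be an integer, c_1 < … < c_s be s distinct real numbers, and A the coefficient matrix of the associated Runge–Kutta collocation method. Then 0 is an eigenvalue of A if and only if there exists j ∈ {1, …, s} such that c_j = 0, which in turn holds if and only if 0 is a root of τ(π). -/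
open Polynomial Matrix MeasureTheory

/-!
Collocation integrates polynomials of degree `< s` exactly, so with `V` the Vandermonde matrix of
the nodes, `(A V)_{ik} = ∫_0^{c_i} t^k dt = c_i^{k+1}/(k+1)`, i.e. `A V = diag(c) V diag(1/(k+1))`.
As `V` is invertible, `det A = c_1 ⋯ c_s / s!`, which vanishes iff some node is `0`.
On the polynomial side `τ` fixes the constant coefficient, so `τ(π)(0) = π(0) = ∏ (-c_i)`.
-/

open Finset

namespace Matrix

theorem hasEigenvalue_toLin'_zero_iff {K n : Type*} [Field K] [Fintype n] [DecidableEq n]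
    (M : Matrix n n K) : Module.End.HasEigenvalue (toLin' M) 0 ↔ M.det = 0 := by
  rw [← LinearMap.det_toLin']
  exact (LinearMap.hasEigenvalue_zero_tfae _).out 0 3

end Matrix

section Collocation

variable {s : ℕ} {c : Fin s → ℝ}

theorem lagrangeFun_eq_eval_basis (i : Fin s) (t : ℝ) :
    lagrangeFun s c i t = (Lagrange.basis univ c i).eval t := by
  rw [Lagrange.basis, eval_prod, lagrangeFun]
  refine prod_congr rfl fun j _ => ?_
  simp [Lagrange.basisDivisor, div_eq_inv_mul]

theorem continuous_lagrangeFun (i : Fin s) : Continuous (lagrangeFun s c i) :=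
  continuous_finsetProd _ fun _ _ => (continuous_id.sub continuous_const).div_const _

theorem sum_lagrangeFun_mul_eval (hc : Function.Injective c) {p : ℝ[X]} (hp : p.degree < s)
    (t : ℝ) : ∑ j, lagrangeFun s c j t * p.eval (c j) = p.eval t := by
  have hp' : p.degree < (univ : Finset (Fin s)).card := by simpa using hp
  conv_rhs => rw [Lagrange.eq_interpolate hc.injOn hp', Lagrange.interpolate_apply, eval_finsetSum]
  simp [lagrangeFun_eq_eval_basis, mul_comm]

theorem collocA_mul_vandermonde (hc : Function.Injective c) :
    collocA s c * vandermonde c =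
      diagonal c * vandermonde c * diagonal fun k : Fin s => ((k : ℝ) + 1)⁻¹ := by
  ext i k
  have hexact : ∀ t, ∑ j, lagrangeFun s c j t * c j ^ (k : ℕ) = t ^ (k : ℕ) := fun t => by
    simpa using sum_lagrangeFun_mul_eval hc (p := X ^ (k : ℕ)) (by simp) t
  calc (collocA s c * vandermonde c) i k
      = ∫ t in (0 : ℝ)..c i, ∑ j, lagrangeFun s c j t * c j ^ (k : ℕ) := by
        rw [intervalIntegral.integral_finsetSum
          (f := fun j t => lagrangeFun s c j t * c j ^ (k : ℕ)) fun j _ =>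
          ((continuous_lagrangeFun j).mul continuous_const).intervalIntegrable _ _]
        simp only [mul_apply, collocA, of_apply, vandermonde_apply,
          intervalIntegral.integral_mul_const]
    _ = c i ^ ((k : ℕ) + 1) / ((k : ℕ) + 1) := by simp [hexact, integral_pow]
    _ = (diagonal c * vandermonde c * diagonal fun k : Fin s => ((k : ℝ) + 1)⁻¹) i k := by
        simp [pow_succ, div_eq_mul_inv, mul_comm]

theorem det_collocA (hc : Function.Injective c) :
    (collocA s c).det = (∏ i, c i) / s.factorial := by
  have hV : (vandermonde c).det ≠ 0 := det_vandermonde_ne_zero_iff.mpr hc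
  have h := congrArg det (collocA_mul_vandermonde hc)
  rw [det_mul, det_mul, det_mul, det_diagonal, det_diagonal, mul_right_comm] at h
  have hfact : ∏ k : Fin s, ((k : ℝ) + 1) = s.factorial := by
    rw [Fin.prod_univ_eq_prod_range (fun k => (k : ℝ) + 1)]
    exact_mod_cast prod_range_add_one_eq_factorial s
  rw [mul_right_cancel₀ hV h, prod_inv_distrib, hfact, div_eq_mul_inv]

theorem isRoot_piPoly_iff {x : ℝ} : (piPoly s c).IsRoot x ↔ ∃ j, c j = x := by
  simp only [piPoly, isRoot_prod, root_X_sub_C, mem_univ, true_and]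

end Collocation

theorem eval_zero_tauP (p : ℝ[X]) : (tauP p).eval 0 = p.eval 0 := by
  rw [tauP, eval_finsetSum, ← coeff_zero_eq_eval_zero p, sum_eq_single 0]
  · simp
  · intro k _ hk
    simp [hk]
  · intro h
    simp [notMem_support_iff.mp h]

theorem zero_eigenvalue_iff_general (s : ℕ) (c : Fin s → ℝ) (hc : StrictMono c) :
    (Module.End.HasEigenvalue (Matrix.toLin' (collocA s c)) 0 ↔ ∃ j, c j = 0) ∧
    ((∃ j, c j = 0) ↔ (tauP (piPoly s c)).IsRoot 0) := by
  refine ⟨?_, ?_⟩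
  · rw [Matrix.hasEigenvalue_toLin'_zero_iff, det_collocA hc.injective, div_eq_zero_iff,
      or_iff_left (Nat.cast_ne_zero.mpr s.factorial_ne_zero), prod_eq_zero_iff]
    simp
  · rw [IsRoot, eval_zero_tauP, ← IsRoot, isRoot_piPoly_iff]

/-- `0` is an eigenvalue of `A` iff some `c_j = 0`, iff `0` is a root of `τ(π)`. -/
theorem zero_eigenvalue_iff (s : ℕ) (hs : 1 ≤ s) (c : Fin s → ℝ) (hc : StrictMono c) :
    (Module.End.HasEigenvalue (Matrix.toLin' (collocA s c)) 0 ↔ ∃ j, c j = 0) ∧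
    ((∃ j, c j = 0) ↔ (tauP (piPoly s c)).IsRoot 0) :=
  zero_eigenvalue_iff_general s c hc
end

section
/- Let s ≥ 1 be an integer, c_1 < … < c_s be s distinct real numbers, and (A, b) the coefficients of the associated Runge–Kutta collocation method with linear stability function R(λ) = 1 + λ bᵀ (I − λA)^{-1} 𝟙. Then for every λ ∈ ℂ \ {0} such that 1/λ is not a root of τ(π) (so that I − λA is invertible), one has R(λ) = τ(π(X+1))(1/λ) / τ(π(X))(1/λ), where π(X+1) denotes the polynomial π composed with X+1. -/
/-!
Put `μ = 1/λ` and `w = ∑ₖ μ^(k+1) π⁽ᵏ⁾`, so that `w' = λ w - π`. Then `w` has degree `≤ s` and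
`w' = λ w` at the nodes. Since the quadrature rules given by `A` and `b` integrate polynomials of
degree `< s` exactly, this gives `(I - λA) (w(cᵢ))ᵢ = w(0) 𝟙` and `λ bᵀ (w(cᵢ))ᵢ = w(1) - w(0)`, hence
`R(λ) = w(1) / w(0)`. From `π⁽ᵏ⁾(0) = k! [Xᵏ] π` we get `w(0) = μ τ(π)(μ)`, and shifting by `1`
gives `w(1) = μ τ(π(X+1))(μ)`.

For invertibility, integrating the interpolant of a kernel vector of `I - λA` gives a polynomial `P`
with `P(0) = 0` and `P' = λ P` at the nodes. Then `P' - λ P = β π` for a constant `β`, so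
`P = -β w`. Since `w(0) ≠ 0`, it follows that `β = 0` and `P = 0`.
-/

open Polynomial Matrix MeasureTheory

open Finset
open scoped Nat

namespace Polynomial

section Resolvent

variable {R : Type*} [CommRing R]

/-- `μ (1 - μ D)⁻¹ h` for the differentiation operator `D`; the Neumann series terminates because
`D` is nilpotent on polynomials. -/
noncomputable def derivResolvent (μ : R) (h : R[X]) : R[X] :=
  ∑ k ∈ range (h.natDegree + 1), μ ^ (k + 1) • derivative^[k] h

variable (μ : R) (h : R[X])

theorem derivResolvent_eq_sum_range {n : ℕ} (hn : h.natDegree < n) :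
    derivResolvent μ h = ∑ k ∈ range n, μ ^ (k + 1) • derivative^[k] h := by
  refine sum_subset (range_subset_range.mpr hn) fun _ _ hk => ?_
  rw [iterate_derivative_eq_zero (by simpa using hk), smul_zero]

theorem natDegree_derivResolvent_le : (derivResolvent μ h).natDegree ≤ h.natDegree :=
  natDegree_sum_le_of_forall_le _ _ fun _ _ =>
    (natDegree_smul_le _ _).trans <| (natDegree_iterate_derivative _ _).trans (Nat.sub_le _ _)

theorem derivative_derivResolvent {lam : R} (hμ : lam * μ = 1) :
    derivative (derivResolvent μ h) = lam • derivResolvent μ h - h := by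
  have htel : ∀ k, lam • μ ^ (k + 1) • derivative^[k] h
      - derivative (μ ^ (k + 1) • derivative^[k] h)
      = μ ^ k • derivative^[k] h - μ ^ (k + 1) • derivative^[k + 1] h := by
    intro k
    rw [smul_smul, pow_succ, mul_comm (μ ^ k), ← mul_assoc, hμ, one_mul, derivative_smul,
      Function.iterate_succ_apply']
  rw [eq_sub_iff_add_eq, ← eq_sub_iff_add_eq', derivResolvent, smul_sum, derivative_sum,
    ← sum_sub_distrib, sum_congr rfl fun k _ => htel k, sum_range_sub',
    iterate_derivative_eq_zero (Nat.lt_succ_self _)]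
  simp

theorem iterate_derivative_comp_X_add_C (a : R) (k : ℕ) :
    derivative^[k] (h.comp (X + C a)) = (derivative^[k] h).comp (X + C a) := by
  induction k with
  | zero => rfl
  | succ k ih => simp [Function.iterate_succ_apply', ih, derivative_comp]

theorem derivResolvent_comp_X_add_C (a : R) :
    derivResolvent μ (h.comp (X + C a)) = (derivResolvent μ h).comp (X + C a) := by
  have hdeg : (h.comp (X + C a)).natDegree < h.natDegree + 1 :=
    Nat.lt_succ_of_le <| natDegree_comp_le.trans <| by
      simpa using Nat.mul_le_mul_left h.natDegree natDegree_X_le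
  rw [derivResolvent_eq_sum_range μ _ hdeg, derivResolvent, sum_comp]
  simp [iterate_derivative_comp_X_add_C, smul_comp]

theorem eval_one_derivResolvent :
    (derivResolvent μ h).eval 1 = (derivResolvent μ (h.comp (X + 1))).eval 0 := by
  simpa using congrArg (eval 0) (derivResolvent_comp_X_add_C μ h 1).symm

theorem eval_zero_derivResolvent {n : ℕ} (hn : h.natDegree < n) :
    (derivResolvent μ h).eval 0 = μ * ∑ k ∈ range n, (k ! : R) * h.coeff k * μ ^ k := by
  rw [derivResolvent_eq_sum_range μ h hn, eval_finsetSum, mul_sum]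
  refine sum_congr rfl fun k _ => ?_
  rw [eval_smul, ← coeff_zero_eq_eval_zero, coeff_iterate_derivative, zero_add,
    Nat.descFactorial_self, nsmul_eq_mul, smul_eq_mul]
  ring

end Resolvent

theorem eq_zero_of_derivative_eq_smul {R : Type*} [CommRing R] [NoZeroDivisors R] {lam : R}
    (hlam : lam ≠ 0) {q : R[X]} (h : derivative q = lam • q) : q = 0 := by
  by_contra hq
  have htop := congrArg (coeff · q.natDegree) h
  simp only [coeff_derivative, coeff_smul, smul_eq_mul, coeff_natDegree_succ_eq_zero,
    zero_mul] at htop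
  exact mul_ne_zero hlam (leadingCoeff_ne_zero.mpr hq) htop.symm

theorem exists_derivative_eq {K : Type*} [Field K] [CharZero K] {q : K[X]} {n : ℕ}
    (hq : q.degree < n) : ∃ P : K[X], derivative P = q ∧ P.eval 0 = 0 ∧ P.natDegree ≤ n := by
  refine ⟨∑ k ∈ range n, monomial (k + 1) (q.coeff k / (k + 1)), ?_, by simp [eval_finsetSum], ?_⟩
  · ext m
    simp only [coeff_derivative, finsetSum_coeff, coeff_monomial, add_left_inj, sum_ite_eq',
      mem_range]
    split_ifs with hm
    · field_simp
    · rw [zero_mul, coeff_eq_zero_of_degree_lt (hq.trans_le (by exact_mod_cast not_lt.mp hm))]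
  · exact natDegree_sum_le_of_forall_le _ _ fun k hk =>
      (natDegree_monomial_le _).trans (mem_range.mp hk)

end Polynomial

theorem Lagrange.eq_C_mul_nodal_of_eval_eq_zero {F ι : Type*} [Field F] {s : Finset ι}
    {v : ι → F} (hvs : Set.InjOn v s) {r : F[X]} (hr : r.natDegree ≤ #s)
    (heval : ∀ i ∈ s, r.eval (v i) = 0) : r = C (r.coeff #s) * Lagrange.nodal s v := by
  refine eq_of_degree_sub_lt_of_eval_index_eq s hvs ?_ fun i hi => by
    simp [heval i hi, Lagrange.eval_nodal_at_node hi]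
  refine (degree_lt_iff_coeff_zero _ _).mpr fun m hm => ?_
  rcases hm.eq_or_lt with rfl | hlt
  · have hlead := (Lagrange.nodal_monic (s := s) (v := v)).coeff_natDegree
    rw [Lagrange.natDegree_nodal] at hlead
    simp [hlead]
  · rw [coeff_sub, coeff_C_mul, coeff_eq_zero_of_natDegree_lt (hr.trans_lt hlt),
      coeff_eq_zero_of_natDegree_lt (Lagrange.natDegree_nodal.trans_lt hlt), mul_zero, sub_zero]

namespace Collocation

variable {s : ℕ} {c : Fin s → ℝ}

theorem aeval_tauP (p : ℝ[X]) (μ : ℂ) :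
    aeval μ (tauP p) = ∑ k ∈ range (p.natDegree + 1), (k ! : ℂ) * p.coeff k * μ ^ k := by
  rw [tauP, map_sum]
  refine (sum_subset supp_subset_range_natDegree_succ fun k _ hk => ?_).trans
    (sum_congr rfl fun k _ => by simp)
  simp [notMem_support_iff.mp hk]

theorem eval_zero_derivResolvent_map_ofReal (p : ℝ[X]) (μ : ℂ) :
    (derivResolvent μ (p.map Complex.ofRealHom)).eval 0 = μ * aeval μ (tauP p) := by
  rw [eval_zero_derivResolvent μ _ (n := p.natDegree + 1) (by rw [natDegree_map]; omega),
    aeval_tauP]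
  simp

theorem map_piPoly_ofReal (s : ℕ) (c : Fin s → ℝ) :
    (piPoly s c).map Complex.ofRealHom = Lagrange.nodal univ (fun j => (c j : ℂ)) := by
  simp [piPoly, Lagrange.nodal, Polynomial.map_prod]

theorem eval_lagrangeBasis_ofReal (c : Fin s → ℝ) (j : Fin s) (t : ℝ) :
    (Lagrange.basis univ (fun i => (c i : ℂ)) j).eval (t : ℂ) = lagrangeFun s c j t := by
  simp [Lagrange.basis, Lagrange.basisDivisor, lagrangeFun, eval_prod, div_eq_mul_inv, mul_comm]

theorem eval_sub_eval_zero_eq_sum_integral_lagrangeFun (hc : Function.Injective c) {q : ℂ[X]}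
    (hq : q.natDegree ≤ s) (x : ℝ) :
    q.eval (x : ℂ) - q.eval 0 =
      ∑ j, ((∫ t in (0 : ℝ)..x, lagrangeFun s c j t : ℝ) : ℂ) * (derivative q).eval (c j : ℂ) := by
  have hinj : Set.InjOn (fun j => (c j : ℂ)) (univ : Finset (Fin s)) :=
    (Complex.ofReal_injective.comp hc).injOn
  have hdeg : (derivative q).degree < #(univ : Finset (Fin s)) := by
    rcases eq_or_ne q 0 with rfl | hq0
    · simp
    · rw [Finset.card_univ, Fintype.card_fin]
      exact (degree_derivative_lt hq0).trans_le (degree_le_natDegree.trans (by exact_mod_cast hq))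
  have hftc : q.eval (x : ℂ) - q.eval 0 = ∫ t in (0 : ℝ)..x, (derivative q).eval (t : ℂ) := by
    rw [intervalIntegral.integral_eq_sub_of_hasDerivAt
      (fun t _ => (q.hasDerivAt (t : ℂ)).comp_ofReal)
      (((Polynomial.continuous _).comp Complex.continuous_ofReal).intervalIntegrable _ _)]
    simp
  calc q.eval (x : ℂ) - q.eval 0
      = ∫ t in (0 : ℝ)..x, ∑ j, (derivative q).eval (c j : ℂ) * (lagrangeFun s c j t : ℂ) := by
        rw [hftc]
        congr 1 with t
        conv_lhs => rw [Lagrange.eq_interpolate hinj hdeg]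
        simp [Lagrange.interpolate_apply, eval_finsetSum, eval_lagrangeBasis_ofReal]
    _ = _ := by
        rw [intervalIntegral.integral_finsetSum fun j _ =>
          Continuous.intervalIntegrable (by unfold lagrangeFun; fun_prop) _ _]
        refine sum_congr rfl fun j _ => ?_
        rw [intervalIntegral.integral_const_mul, intervalIntegral.integral_ofReal, mul_comm]

noncomputable def evalNodes (c : Fin s → ℝ) : ℂ[X] →ₗ[ℂ] Fin s → ℂ :=
  LinearMap.pi fun j => leval (c j : ℂ)

@[simp]
theorem evalNodes_apply (q : ℂ[X]) (j : Fin s) : evalNodes c q j = q.eval (c j : ℂ) := rfl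

theorem evalNodes_map_piPoly_ofReal : evalNodes c ((piPoly s c).map Complex.ofRealHom) = 0 := by
  ext j
  rw [evalNodes_apply, map_piPoly_ofReal]
  exact Lagrange.eval_nodal_at_node (v := fun j => (c j : ℂ)) (mem_univ j)

section CollocationConditions

variable {q : ℂ[X]}

theorem collocAC_mulVec_evalNodes_derivative (hc : Function.Injective c) (hq : q.natDegree ≤ s) :
    collocAC s c *ᵥ evalNodes c (derivative q) = evalNodes c q - fun _ => q.eval 0 := by
  ext i
  simp [mulVec, dotProduct, collocAC, collocA,
    eval_sub_eval_zero_eq_sum_integral_lagrangeFun hc hq]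

theorem collocBC_dotProduct_evalNodes_derivative (hc : Function.Injective c)
    (hq : q.natDegree ≤ s) : collocBC s c ⬝ᵥ evalNodes c (derivative q) = q.eval 1 - q.eval 0 := by
  simpa [dotProduct, collocBC, collocB] using
    (eval_sub_eval_zero_eq_sum_integral_lagrangeFun hc hq 1).symm

variable {lam : ℂ}

theorem one_sub_smul_collocAC_mulVec_evalNodes (hc : Function.Injective c) (hq : q.natDegree ≤ s)
    (hcol : evalNodes c (derivative q) = lam • evalNodes c q) :
    (1 - lam • collocAC s c) *ᵥ evalNodes c q = fun _ => q.eval 0 := by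
  rw [sub_mulVec, one_mulVec, smul_mulVec, ← mulVec_smul, ← hcol,
    collocAC_mulVec_evalNodes_derivative hc hq, sub_sub_cancel]

theorem mul_collocBC_dotProduct_evalNodes (hc : Function.Injective c) (hq : q.natDegree ≤ s)
    (hcol : evalNodes c (derivative q) = lam • evalNodes c q) :
    lam * (collocBC s c ⬝ᵥ evalNodes c q) = q.eval 1 - q.eval 0 := by
  rw [← smul_eq_mul, ← dotProduct_smul, ← hcol, collocBC_dotProduct_evalNodes_derivative hc hq]

theorem stabR_eq_eval_one_div_eval_zero (hc : Function.Injective c)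
    (hdet : IsUnit (1 - lam • collocAC s c).det) (hq : q.natDegree ≤ s)
    (hcol : evalNodes c (derivative q) = lam • evalNodes c q) (hq0 : q.eval 0 ≠ 0) :
    stabR s c lam = q.eval 1 / q.eval 0 := by
  have hstage : (1 - lam • collocAC s c) *ᵥ ((q.eval 0)⁻¹ • evalNodes c q) = fun _ => 1 := by
    rw [mulVec_smul, one_sub_smul_collocAC_mulVec_evalNodes hc hq hcol]
    ext
    simp [hq0]
  rw [stabR, ← hstage, mulVec_mulVec, nonsing_inv_mul _ hdet, one_mulVec, dotProduct_smul,
    smul_eq_mul, mul_left_comm, mul_collocBC_dotProduct_evalNodes hc hq hcol]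
  field_simp
  ring

theorem exists_collocation_of_mulVec_eq_zero (hc : Function.Injective c) {g : Fin s → ℂ}
    (hg : (1 - lam • collocAC s c) *ᵥ g = 0) :
    ∃ P : ℂ[X], P.natDegree ≤ s ∧ P.eval 0 = 0 ∧
      evalNodes c (derivative P) = lam • evalNodes c P ∧ evalNodes c P = g := by
  have hinj : Set.InjOn (fun j => (c j : ℂ)) (univ : Finset (Fin s)) :=
    (Complex.ofReal_injective.comp hc).injOn
  set p := Lagrange.interpolate univ (fun j => (c j : ℂ)) g
  have hp : evalNodes c p = g :=
    funext fun j => Lagrange.eval_interpolate_at_node g hinj (mem_univ j)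
  obtain ⟨Q, hQ, hQ0, hQdeg⟩ := exists_derivative_eq (n := s) (q := p)
    ((Lagrange.degree_interpolate_lt g hinj).trans_eq (by simp))
  have hAg : collocAC s c *ᵥ g = evalNodes c Q := by
    rw [← hp, ← hQ, collocAC_mulVec_evalNodes_derivative hc hQdeg, hQ0]
    exact sub_zero _
  have hgQ : evalNodes c (lam • Q) = g := by
    rw [sub_mulVec, one_mulVec, smul_mulVec, hAg, sub_eq_zero] at hg
    rw [map_smul, hg]
  refine ⟨lam • Q, (natDegree_smul_le _ _).trans hQdeg, by simp [hQ0], ?_, hgQ⟩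
  rw [derivative_smul, hQ, map_smul, hp, hgQ]

end CollocationConditions

/-- Up to normalisation, the collocation polynomial of `y' = λ y` on `[0, 1]`. -/
noncomputable def collocPoly (s : ℕ) (c : Fin s → ℝ) (lam : ℂ) : ℂ[X] :=
  derivResolvent (1 / lam) ((piPoly s c).map Complex.ofRealHom)

theorem natDegree_collocPoly_le (s : ℕ) (c : Fin s → ℝ) (lam : ℂ) :
    (collocPoly s c lam).natDegree ≤ s :=
  (natDegree_derivResolvent_le _ _).trans <| by simp [map_piPoly_ofReal, Lagrange.natDegree_nodal]

theorem derivative_collocPoly {lam : ℂ} (hlam : lam ≠ 0) :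
    derivative (collocPoly s c lam)
      = lam • collocPoly s c lam - (piPoly s c).map Complex.ofRealHom :=
  derivative_derivResolvent _ _ (mul_one_div_cancel hlam)

theorem evalNodes_derivative_collocPoly {lam : ℂ} (hlam : lam ≠ 0) :
    evalNodes c (derivative (collocPoly s c lam)) = lam • evalNodes c (collocPoly s c lam) := by
  rw [derivative_collocPoly hlam, map_sub, map_smul, evalNodes_map_piPoly_ofReal, sub_zero]

theorem eval_zero_collocPoly (s : ℕ) (c : Fin s → ℝ) (lam : ℂ) :
    (collocPoly s c lam).eval 0 = 1 / lam * aeval (1 / lam) (tauP (piPoly s c)) :=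
  eval_zero_derivResolvent_map_ofReal _ _

theorem eval_one_collocPoly (s : ℕ) (c : Fin s → ℝ) (lam : ℂ) :
    (collocPoly s c lam).eval 1
      = 1 / lam * aeval (1 / lam) (tauP ((piPoly s c).comp (X + 1))) := by
  rw [collocPoly, eval_one_derivResolvent, ← eval_zero_derivResolvent_map_ofReal,
    Polynomial.map_comp]
  simp

theorem eq_zero_of_evalNodes_derivative_eq_smul (hc : Function.Injective c) {lam : ℂ}
    (hlam : lam ≠ 0) (hroot : aeval (1 / lam) (tauP (piPoly s c)) ≠ 0) {P : ℂ[X]}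
    (hdeg : P.natDegree ≤ s) (h0 : P.eval 0 = 0)
    (hcol : evalNodes c (derivative P) = lam • evalNodes c P) : P = 0 := by
  obtain ⟨β, hβ⟩ : ∃ β : ℂ, derivative P - lam • P = β • (piPoly s c).map Complex.ofRealHom := by
    rw [map_piPoly_ofReal]
    refine ⟨_, (Lagrange.eq_C_mul_nodal_of_eval_eq_zero (Complex.ofReal_injective.comp hc).injOn
      ?_ fun j _ => ?_).trans (smul_eq_C_mul _).symm⟩
    · rw [Finset.card_univ, Fintype.card_fin]
      exact (natDegree_sub_le _ _).trans <| max_le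
        (natDegree_derivative_le P |>.trans <| Nat.sub_le _ _ |>.trans hdeg)
        ((natDegree_smul_le _ _).trans hdeg)
    · simpa [sub_eq_zero] using congrFun hcol j
  have hPw : P + β • collocPoly s c lam = 0 := by
    refine eq_zero_of_derivative_eq_smul hlam ?_
    rw [derivative_add, derivative_smul, derivative_collocPoly hlam, eq_add_of_sub_eq hβ]
    module
  have hβ0 : β = 0 := by
    have hPw0 := congrArg (eval 0) hPw
    rw [eval_add, h0, zero_add, eval_smul, eval_zero_collocPoly, smul_eq_mul, eval_zero] at hPw0
    exact (mul_eq_zero.mp hPw0).resolve_right (mul_ne_zero (one_div_ne_zero hlam) hroot)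
  simpa [hβ0] using hPw

theorem isUnit_det_one_sub_smul_collocAC (hc : Function.Injective c) {lam : ℂ} (hlam : lam ≠ 0)
    (hroot : aeval (1 / lam) (tauP (piPoly s c)) ≠ 0) :
    IsUnit (1 - lam • collocAC s c).det := by
  rw [isUnit_iff_ne_zero, Ne, ← exists_mulVec_eq_zero_iff]
  rintro ⟨g, hg0, hg⟩
  obtain ⟨P, hdeg, h0, hcol, rfl⟩ := exists_collocation_of_mulVec_eq_zero hc hg
  exact hg0 (by rw [eq_zero_of_evalNodes_derivative_eq_smul hc hlam hroot hdeg h0 hcol, map_zero])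

end Collocation

open Collocation

theorem stabR_eq_tau_ratio_general (s : ℕ) (c : Fin s → ℝ) (hc : StrictMono c)
    (lam : ℂ) (hlam : lam ≠ 0)
    (hroot : Polynomial.aeval (1 / lam) (tauP (piPoly s c)) ≠ 0) :
    IsUnit (1 - lam • collocAC s c).det ∧
    stabR s c lam =
      Polynomial.aeval (1 / lam) (tauP ((piPoly s c).comp (Polynomial.X + 1))) /
      Polynomial.aeval (1 / lam) (tauP (piPoly s c)) := by
  have hdet := isUnit_det_one_sub_smul_collocAC hc.injective hlam hroot
  have h0 : (collocPoly s c lam).eval 0 ≠ 0 := by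
    rw [eval_zero_collocPoly]
    exact mul_ne_zero (one_div_ne_zero hlam) hroot
  refine ⟨hdet, ?_⟩
  rw [stabR_eq_eval_one_div_eval_zero hc.injective hdet (natDegree_collocPoly_le s c lam)
    (evalNodes_derivative_collocPoly hlam) h0, eval_one_collocPoly, eval_zero_collocPoly,
    mul_div_mul_left _ _ (one_div_ne_zero hlam)]

/-- `R(λ) = τ(π(X+1))(1/λ) / τ(π(X))(1/λ)` whenever `λ ≠ 0` and `1/λ` is not a
root of `τ(π)` (so that `I - λA` is invertible). -/
theorem stabR_eq_tau_ratio (s : ℕ) (hs : 1 ≤ s) (c : Fin s → ℝ) (hc : StrictMono c)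
    (lam : ℂ) (hlam : lam ≠ 0)
    (hroot : Polynomial.aeval (1 / lam) (tauP (piPoly s c)) ≠ 0) :
    IsUnit (1 - lam • collocAC s c).det ∧
    stabR s c lam =
      Polynomial.aeval (1 / lam) (tauP ((piPoly s c).comp (Polynomial.X + 1))) /
      Polynomial.aeval (1 / lam) (tauP (piPoly s c)) :=
  stabR_eq_tau_ratio_general s c hc lam hlam hroot
end

section
/- Let s ≥ 1 be an integer and let c_1 < … < c_s be the s Gauss points in (0,1), i.e. the roots of the s-th derivative of (X(X−1))^s. Then the associated s-stage Runge–Kutta collocation method is A-stable: for every λ ∈ ℂ with Re(λ) ≤ 0 at which I − λA is invertible, |R(λ)| ≤ 1. -/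
open Polynomial Matrix MeasureTheory

/-!
The Gauss nodes make the quadrature `∫₀¹ p = ∑ bᵢ p(cᵢ)` exact for `deg p < 2s`: dividing `p` by
`Dˢ(X(X-1))ˢ`, the quotient has degree `< s` and is orthogonal to the divisor (integrate by parts
`s` times), while the remainder is integrated exactly by Lagrange interpolation. Applied to `ℓᵢ²`
this gives `bᵢ ≥ 0`, and applied to `(LᵢLⱼ)'` with `Lⱼ = ∫₀ ℓⱼ` it gives
`bᵢ aᵢⱼ + bⱼ aⱼᵢ = bᵢ bⱼ`. For any Runge–Kutta method with these two properties, if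
`u = 𝟙 + λ A u` then `|1 + λ bᵀu|² = 1 + 2 Re λ ∑ bᵢ |uᵢ|²`, which is at most `1` when `Re λ ≤ 0`.
-/

namespace Polynomial

open intervalIntegral

theorem integral_eval_derivative (p : ℝ[X]) (a b : ℝ) :
    ∫ t in a..b, (derivative p).eval t = p.eval b - p.eval a :=
  integral_eq_sub_of_hasDerivAt (fun x _ => p.hasDerivAt x)
    ((derivative p).continuous.intervalIntegrable _ _)

theorem integral_eval_mul_iterate_derivative_eq_zero {p q : ℝ[X]} {a b : ℝ} {n : ℕ}
    (ha : (X - C a) ^ n ∣ p) (hb : (X - C b) ^ n ∣ p) (hq : derivative^[n] q = 0) :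
    ∫ t in a..b, q.eval t * (derivative^[n] p).eval t = 0 := by
  induction n generalizing q with
  | zero =>
    rw [Function.iterate_zero_apply] at hq
    simp [hq]
  | succ n ih =>
    have hroot : ∀ x, (X - C x) ^ (n + 1) ∣ p → (derivative^[n] p).eval x = 0 := fun x hx =>
      dvd_iff_isRoot.mp (by simpa using pow_sub_dvd_iterate_derivative_of_pow_dvd n hx)
    have hp : ∀ x, (X - C x) ^ (n + 1) ∣ p → (X - C x) ^ n ∣ p := fun x =>
      (pow_dvd_pow _ n.le_succ).trans
    simp only [Function.iterate_succ_apply']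
    rw [integral_mul_deriv_eq_deriv_mul (fun x _ => q.hasDerivAt x)
        (fun x _ => (derivative^[n] p).hasDerivAt x)
        ((derivative q).continuous.intervalIntegrable _ _)
        ((derivative (derivative^[n] p)).continuous.intervalIntegrable _ _),
      hroot a ha, hroot b hb, ih (hp a ha) (hp b hb) (by rwa [← Function.iterate_succ_apply])]
    ring

noncomputable def antiderivative (p : ℝ[X]) : ℝ[X] :=
  p.sum fun n a => C (a / (n + 1)) * X ^ (n + 1)

@[simp]
theorem derivative_antiderivative (p : ℝ[X]) : derivative p.antiderivative = p := by
  rw [antiderivative, Polynomial.sum, map_sum]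
  conv_rhs => rw [← p.sum_C_mul_X_pow_eq, Polynomial.sum]
  refine Finset.sum_congr rfl fun n _ => ?_
  rw [derivative_C_mul_X_pow]
  push_cast
  rw [div_mul_cancel₀ _ (by positivity)]

@[simp]
theorem eval_zero_antiderivative (p : ℝ[X]) : p.antiderivative.eval 0 = 0 := by
  simp [antiderivative, Polynomial.sum, eval_finsetSum]

theorem natDegree_antiderivative_le (p : ℝ[X]) :
    p.antiderivative.natDegree ≤ p.natDegree + 1 := by
  refine natDegree_sum_le_of_forall_le _ _ fun n hn => (natDegree_C_mul_le _ _).trans ?_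
  simpa using le_natDegree_of_mem_supp n hn

theorem integral_eval_eq_eval_antiderivative (p : ℝ[X]) (x : ℝ) :
    ∫ t in (0 : ℝ)..x, p.eval t = p.antiderivative.eval x := by
  simpa using integral_eval_derivative p.antiderivative 0 x

end Polynomial

section Quadrature

open Finset Lagrange

variable {ι : Type*} [Fintype ι] [DecidableEq ι] {c : ι → ℝ} {a b : ℝ}

theorem integral_eval_eq_sum_of_degree_lt (hc : Function.Injective c) {p : ℝ[X]}
    (hp : p.degree < Fintype.card ι) :
    ∫ t in a..b, p.eval t = ∑ i, p.eval (c i) * ∫ t in a..b, (Lagrange.basis univ c i).eval t := by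
  conv_lhs => rw [eq_interpolate (s := univ) hc.injOn hp, interpolate_apply]
  simp_rw [eval_finsetSum, eval_mul, eval_C]
  rw [intervalIntegral.integral_finsetSum fun i _ =>
    Continuous.intervalIntegrable (by fun_prop) _ _]
  simp_rw [intervalIntegral.integral_const_mul]

theorem integral_eval_eq_sum_of_orthogonal (hc : Function.Injective c) {P : ℝ[X]} {m : ℕ}
    (hP : P.degree = Fintype.card ι) (hroots : ∀ i, P.IsRoot (c i))
    (horth : ∀ q : ℝ[X], q.degree < m → ∫ t in a..b, q.eval t * P.eval t = 0)
    {p : ℝ[X]} (hp : p.natDegree < Fintype.card ι + m) :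
    ∫ t in a..b, p.eval t = ∑ i, p.eval (c i) * ∫ t in a..b, (Lagrange.basis univ c i).eval t := by
  have hP0 : P ≠ 0 := by rintro rfl; simp at hP
  have hquot : (p / P).degree < m := by
    rcases eq_or_ne (p / P) 0 with h | h
    · simp [h]
    have hle : P.degree ≤ p.degree := not_lt.1 fun hlt => h ((Polynomial.div_eq_zero_iff hP0).2 hlt)
    have hsum := degree_add_div hP0 hle
    have hp0 : p ≠ 0 := by rintro rfl; simp at h
    rw [hP, degree_eq_natDegree h, degree_eq_natDegree hp0] at hsum
    rw [degree_eq_natDegree h]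
    have : Fintype.card ι + (p / P).natDegree = p.natDegree := by exact_mod_cast hsum
    exact_mod_cast (by omega : (p / P).natDegree < m)
  have hrem : (p % P).degree < Fintype.card ι := hP ▸ degree_mod_lt p hP0
  have heval : ∀ t, p.eval t = (p / P).eval t * P.eval t + (p % P).eval t := fun t => by
    conv_lhs => rw [← EuclideanDomain.div_add_mod p P]
    rw [eval_add, eval_mul, mul_comm]
  simp_rw [heval, (hroots _).eq_zero, mul_zero, zero_add]
  rw [intervalIntegral.integral_add
      (Continuous.intervalIntegrable (by fun_prop) _ _)
      ((p % P).continuous.intervalIntegrable _ _),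
    horth _ hquot, zero_add, integral_eval_eq_sum_of_degree_lt hc hrem]

end Quadrature

namespace Lagrange

open Finset

variable {F ι : Type*} [Field F] [Fintype ι] [DecidableEq ι] {c : ι → F}

theorem sum_eval_basis_mul (hc : Function.Injective c) (i : ι) (f : ι → F) :
    ∑ k, (Lagrange.basis univ c i).eval (c k) * f k = f i := by
  rw [sum_eq_single i (fun k _ hk => by rw [eval_basis_of_ne hk.symm (mem_univ k), zero_mul])
    (by simp), eval_basis_self hc.injOn (mem_univ i), one_mul]

end Lagrange

section Gauss

open Finset

noncomputable def gaussPoly (s : ℕ) : ℝ[X] :=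
  derivative^[s] ((X * (X - 1)) ^ s)

theorem degree_gaussPoly (s : ℕ) : (gaussPoly s).degree = s := by
  have hmonic : ((X : ℝ[X]) * (X - 1)).Monic := by
    simpa using monic_X.mul (monic_X_sub_C (1 : ℝ))
  have hdeg : (((X : ℝ[X]) * (X - 1)) ^ s).natDegree = s + s := by
    rw [hmonic.natDegree_pow, monic_X.natDegree_mul' (by simpa using X_sub_C_ne_zero (1 : ℝ)),
      natDegree_X, ← C_1, natDegree_X_sub_C]
    ring
  apply degree_eq_of_le_of_coeff_ne_zero
  · refine degree_le_of_natDegree_le ((natDegree_iterate_derivative _ s).trans ?_)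
    omega
  · rw [gaussPoly, coeff_iterate_derivative, ← hdeg, (hmonic.pow s).coeff_natDegree, hdeg,
      nsmul_eq_mul, mul_one, Nat.cast_ne_zero, ne_eq, Nat.descFactorial_eq_zero_iff_lt]
    omega

theorem integral_mul_gaussPoly_eq_zero {s : ℕ} {q : ℝ[X]} (hq : q.degree < s) :
    ∫ t in (0 : ℝ)..1, q.eval t * (gaussPoly s).eval t = 0 :=
  integral_eval_mul_iterate_derivative_eq_zero ⟨(X - 1) ^ s, by simp [mul_pow]⟩
    ⟨X ^ s, by simp [mul_pow, mul_comm]⟩ (iterate_derivative_eq_zero_of_degree_lt hq)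

variable {s : ℕ} {c : Fin s → ℝ}

theorem integral_eval_eq_sum_of_isRoot_gaussPoly (hc : Function.Injective c)
    (hroots : ∀ i, (gaussPoly s).IsRoot (c i)) {p : ℝ[X]} (hp : p.natDegree < 2 * s) :
    ∫ t in (0 : ℝ)..1, p.eval t
      = ∑ i, p.eval (c i) * ∫ t in (0 : ℝ)..1, (Lagrange.basis univ c i).eval t :=
  integral_eval_eq_sum_of_orthogonal hc (by simpa using degree_gaussPoly s) hroots
    (fun _ => integral_mul_gaussPoly_eq_zero) (by simpa [two_mul] using hp)

end Gauss

section Collocation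

open Finset

variable {s : ℕ} {c : Fin s → ℝ}

theorem collocB_eq_integral (i : Fin s) :
    collocB s c i = ∫ t in (0 : ℝ)..1, (Lagrange.basis univ c i).eval t := by
  simp only [collocB, lagrangeFun_eq_eval_basis]

theorem collocB_eq_eval_antiderivative (i : Fin s) :
    collocB s c i = (Lagrange.basis univ c i).antiderivative.eval 1 := by
  rw [collocB_eq_integral, integral_eval_eq_eval_antiderivative]

theorem collocA_eq_eval_antiderivative (i j : Fin s) :
    collocA s c i j = (Lagrange.basis univ c j).antiderivative.eval (c i) := by
  simp only [collocA, of_apply, lagrangeFun_eq_eval_basis, integral_eval_eq_eval_antiderivative]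

theorem natDegree_lagrangeBasis (hc : Function.Injective c) (i : Fin s) :
    (Lagrange.basis univ c i).natDegree = s - 1 := by
  simp [Lagrange.natDegree_basis hc.injOn (mem_univ i)]

theorem integral_eval_basis_mul (hc : Function.Injective c)
    (hroots : ∀ i, (gaussPoly s).IsRoot (c i)) (i : Fin s) {p : ℝ[X]} (hp : p.natDegree ≤ s) :
    ∫ t in (0 : ℝ)..1, (Lagrange.basis univ c i * p).eval t = p.eval (c i) * collocB s c i := by
  have hdeg : (Lagrange.basis univ c i * p).natDegree < 2 * s :=
    natDegree_mul_le.trans_lt (by rw [natDegree_lagrangeBasis hc]; have := i.pos; omega)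
  simp_rw [integral_eval_eq_sum_of_isRoot_gaussPoly hc hroots hdeg, eval_mul, mul_assoc,
    ← collocB_eq_integral, Lagrange.sum_eval_basis_mul hc i (fun k => p.eval (c k) * collocB s c k)]

theorem collocB_nonneg (hc : Function.Injective c)
    (hroots : ∀ i, (gaussPoly s).IsRoot (c i)) (i : Fin s) : 0 ≤ collocB s c i := by
  have h := integral_eval_basis_mul hc hroots i (p := Lagrange.basis univ c i)
    (by rw [natDegree_lagrangeBasis hc]; omega)
  rw [Lagrange.eval_basis_self hc.injOn (mem_univ i), one_mul] at h
  rw [← h]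
  exact intervalIntegral.integral_nonneg zero_le_one fun t _ => by
    rw [eval_mul]; exact mul_self_nonneg _

theorem collocB_mul_collocA_add_collocB_mul_collocA (hc : Function.Injective c)
    (hroots : ∀ i, (gaussPoly s).IsRoot (c i)) (i j : Fin s) :
    collocB s c i * collocA s c i j + collocB s c j * collocA s c j i
      = collocB s c i * collocB s c j := by
  set L : Fin s → ℝ[X] := fun k => (Lagrange.basis univ c k).antiderivative
  have hL : ∀ k, (L k).natDegree ≤ s := fun k =>
    (natDegree_antiderivative_le _).trans (by rw [natDegree_lagrangeBasis hc]; have := k.pos; omega)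
  have hquad : ∀ k l, ∫ t in (0 : ℝ)..1, (Lagrange.basis univ c k * L l).eval t
      = collocB s c k * collocA s c k l := fun k l => by
    rw [integral_eval_basis_mul hc hroots k (hL l), collocA_eq_eval_antiderivative, mul_comm]
  have hprod : derivative (L i * L j)
      = Lagrange.basis univ c i * L j + Lagrange.basis univ c j * L i := by
    simp only [L, derivative_mul, derivative_antiderivative]
    ring
  have hftc := integral_eval_derivative (L i * L j) 0 1
  rw [hprod, eval_mul, eval_mul, ← collocB_eq_eval_antiderivative,
    ← collocB_eq_eval_antiderivative] at hftc
  simp only [eval_add] at hftc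
  rw [intervalIntegral.integral_add (Continuous.intervalIntegrable (by fun_prop) _ _)
    (Continuous.intervalIntegrable (by fun_prop) _ _), hquad, hquad] at hftc
  simpa [L] using hftc

end Collocation

section AlgebraicStability

open Finset ComplexConjugate

variable {ι : Type*} [Fintype ι] {A : Matrix ι ι ℝ} {b : ι → ℝ}

theorem normSq_one_add_mul_sum_eq (hM : ∀ i j, b i * A i j + b j * A j i = b i * b j)
    {lam : ℂ} {u : ι → ℂ} (hu : ∀ i, u i = 1 + lam * ∑ j, (A i j : ℂ) * u j) :
    Complex.normSq (1 + lam * ∑ i, (b i : ℂ) * u i)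
      = 1 + 2 * lam.re * ∑ i, b i * Complex.normSq (u i) := by
  set B := ∑ i, (b i : ℂ) * u i with hB
  set K := ∑ i, b i * Complex.normSq (u i)
  set S := ∑ i, ∑ j, ((b i * A i j : ℝ) : ℂ) * (conj (u i) * u j)
  have hK : (K : ℂ) = conj B + lam * S := by
    simp only [K, B, S, map_sum, map_mul, Complex.conj_ofReal, mul_sum, ← sum_add_distrib]
    push_cast
    refine sum_congr rfl fun i _ => ?_
    have hsum : ∑ j, lam * (b i * A i j * (conj (u i) * u j))
        = b i * conj (u i) * (lam * ∑ j, (A i j : ℂ) * u j) := by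
      rw [mul_sum, mul_sum]
      exact sum_congr rfl fun j _ => by ring
    rw [Complex.normSq_eq_conj_mul_self, hsum]
    linear_combination (b i * conj (u i)) * hu i
  have hK' : (K : ℂ) = B + conj lam * conj S := by
    simpa using congrArg conj hK
  have hS : S + conj S = conj B * B := by
    have hM' : ∀ i j, ((b i * A i j : ℝ) : ℂ) + ((b j * A j i : ℝ) : ℂ) = b i * b j :=
      fun i j => by exact_mod_cast hM i j
    have hconjS : conj S = ∑ i, ∑ j, ((b j * A j i : ℝ) : ℂ) * (conj (u i) * u j) := by
      simp only [S, map_sum, map_mul, Complex.conj_ofReal, Complex.conj_conj]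
      rw [sum_comm]
      exact sum_congr rfl fun i _ => sum_congr rfl fun j _ => by ring
    rw [hconjS, ← sum_add_distrib, hB, map_sum, sum_mul_sum]
    refine sum_congr rfl fun i _ => ?_
    rw [← sum_add_distrib]
    refine sum_congr rfl fun j _ => ?_
    simp only [map_mul, Complex.conj_ofReal]
    linear_combination (conj (u i) * u j) * hM' i j
  apply Complex.ofReal_injective
  rw [Complex.normSq_eq_conj_mul_self]
  push_cast
  have hre : (2 * lam.re : ℂ) = lam + conj lam := by
    rw [Complex.add_conj]
    push_cast
    ring
  rw [hre, map_add, map_one, map_mul]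
  linear_combination (-conj lam) * hK - lam * hK' - lam * conj lam * hS

theorem norm_one_add_mul_dotProduct_inv_mulVec_le_one [DecidableEq ι] (hb : ∀ i, 0 ≤ b i)
    (hM : ∀ i j, b i * A i j + b j * A j i = b i * b j) {lam : ℂ} (hre : lam.re ≤ 0)
    (hdet : IsUnit (1 - lam • A.map ((↑) : ℝ → ℂ)).det) :
    ‖1 + lam * ((fun i => (b i : ℂ)) ⬝ᵥ ((1 - lam • A.map ((↑) : ℝ → ℂ))⁻¹ *ᵥ fun _ => 1))‖
      ≤ 1 := by
  set u := (1 - lam • A.map ((↑) : ℝ → ℂ))⁻¹ *ᵥ fun _ => 1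
  have hu : ∀ i, u i = 1 + lam * ∑ j, (A i j : ℂ) * u j := by
    have h : (1 - lam • A.map ((↑) : ℝ → ℂ)) *ᵥ u = fun _ => 1 := by
      rw [mulVec_mulVec, mul_nonsing_inv _ hdet, one_mulVec]
    rw [sub_mulVec, one_mulVec, smul_mulVec] at h
    intro i
    have hi := congrFun h i
    simp only [Pi.sub_apply, Pi.smul_apply, smul_eq_mul, mulVec, dotProduct, map_apply] at hi
    linear_combination hi
  have hK : 0 ≤ ∑ i, b i * Complex.normSq (u i) :=
    sum_nonneg fun i _ => mul_nonneg (hb i) (Complex.normSq_nonneg _)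
  have hsq : Complex.normSq (1 + lam * ∑ i, (b i : ℂ) * u i) ≤ 1 := by
    rw [normSq_one_add_mul_sum_eq hM hu]
    nlinarith
  rw [Complex.normSq_eq_norm_sq] at hsq
  exact (sq_le_one_iff₀ (norm_nonneg _)).1 hsq

end AlgebraicStability

theorem gauss_AStable_general (s : ℕ) (c : Fin s → ℝ) (hc : StrictMono c)
    (hroots : ∀ i, (Polynomial.derivative^[s]
      ((Polynomial.X * (Polynomial.X - 1)) ^ s : Polynomial ℝ)).IsRoot (c i)) :
    AStable s c := fun _ hre hdet =>
  norm_one_add_mul_dotProduct_inv_mulVec_le_one (collocB_nonneg hc.injective hroots)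
    (collocB_mul_collocA_add_collocB_mul_collocA hc.injective hroots) hre hdet

/-- the collocation Runge--Kutta method at the `s` Gauss points is `A`-stable. -/
theorem gauss_AStable (s : ℕ) (hs : 1 ≤ s) (c : Fin s → ℝ) (hc : StrictMono c)
    (hmem : ∀ i, c i ∈ Set.Ioo (0:ℝ) 1)
    (hroots : ∀ i, (Polynomial.derivative^[s]
      ((Polynomial.X * (Polynomial.X - 1)) ^ s : Polynomial ℝ)).IsRoot (c i)) :
    AStable s c :=
  gauss_AStable_general s c hc hroots
end
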